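/- arXiv:2402.19223 — 2 statements merged into one kernel-verified Lean document; each statement's English description precedes it below -/
import Mathlib

section
/- For every k ≥ 2, the Lyndon factorization of F_{2k} with its last two characters removed is ℓ_1, …, ℓ_{k-2}, φ^{k-2}(a), φ^{k-3}(a), …, φ^0(a), where ℓ_1 = ab, ℓ_{i+1} = φ(ℓ_i), and φ(a) = aab, φ(b) = ab. -/
/-!
`φ` is strictly monotone for the lexicographic order, and it sends a Lyndon word beginning
with `a` to a Lyndon word beginning with `a`. All proposed factors are `φ`-iterates of `a` or
of `ab = ℓ 1`, hence Lyndon. They decrease: `ℓ (i+1) = φ^i (aabab) < φ^i (ab) = ℓ i`,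
`φ^j a` is a proper prefix of `φ^(j+1) a = φ^j a · φ^j (ab)`, and at the junction
`φ^(i+1) a = φ^i (aab) < φ^i (ab) = ℓ (i+1)`. Their product is `F''_(2k)` because of the
identity `ab · φ(F_(n+1)) = F_(n+3) · ab`: it gives `F''_(2k+2) = ab · φ(F''_(2k)) · a`,
which is how the list of factors grows from `k` to `k + 1`.
-/

/-- Strings over the binary alphabet `{a, b}`: `false` is `a`, `true` is `b`. -/
abbrev Word := List Bool

/-- `w` is primitive if it is not of the form `x^j` for any `j ≥ 2`. -/
def Primitive (w : Word) : Prop := ¬ ∃ (x : Word) (j : ℕ), 2 ≤ j ∧ w = (List.replicate j x).flatten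

/-- `u` occurs in `w` at (0-indexed) position `i`. -/
def occursAt (u w : Word) (i : ℕ) : Prop :=
  i + u.length ≤ w.length ∧ (w.drop i).take u.length = u

instance (u w : Word) (i : ℕ) : Decidable (occursAt u w i) := by
  unfold occursAt; infer_instance

/-- Fibonacci words: `F 1 = b`, `F 2 = a`, `F (k+1) = F k ++ F (k-1)`. -/
def F : ℕ → Word
  | 0 => []
  | 1 => [true]
  | 2 => [false]
  | (n+3) => F (n+2) ++ F (n+1)

/-- Fibonacci numbers with `f 1 = f 2 = 1`. -/
def f : ℕ → ℕ
  | 0 => 0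
  | 1 => 1
  | (n+2) => f (n+1) + f n

/-- The morphism `φ(a) = aab`, `φ(b) = ab`. -/
def phi (w : Word) : Word := w.flatMap fun c => if c then [false, true] else [false, false, true]

/-- Lexicographic order on words induced by `a < b` (a proper prefix is smaller). -/
def wlt (x y : Word) : Prop := List.Lex (· < ·) x y

/-- `u` is a border of `w`: a proper substring that is both a prefix and a suffix. -/
def IsBorder (u w : Word) : Prop := u ≠ w ∧ u <+: w ∧ u <:+ w

/-- `w` is a Lyndon word: it is smaller than all of its proper nonempty suffixes. -/
def IsLyndon (w : Word) : Prop := ∀ s : Word, s <:+ w → s ≠ [] → s ≠ w → wlt w s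

/-- `fs` is the Lyndon factorization of `w`: a factorization into nonempty Lyndon
words that is lexicographically non-increasing (powers written as repetitions). -/
def IsLyndonFactorization (w : Word) (fs : List Word) : Prop :=
  fs.flatten = w ∧ (∀ x ∈ fs, IsLyndon x ∧ x ≠ []) ∧ List.Chain' (fun x y => ¬ wlt x y) fs

/-- `ℓ 1 = ab`, `ℓ (k+1) = φ (ℓ k)`. -/
def ell : ℕ → Word
  | 0 => []
  | 1 => [false, true]
  | (n+2) => phi (ell (n+1))

theorem suffix_append_cases {α : Type*} {s u v : List α} (h : s <:+ u ++ v) :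
    s <:+ v ∨ ∃ t, t <:+ u ∧ s = t ++ v := by
  obtain ⟨p, hp⟩ := h
  rcases List.append_eq_append_iff.1 hp with ⟨t, rfl, rfl⟩ | ⟨t, rfl, rfl⟩
  · exact Or.inr ⟨t, List.suffix_append p t, rfl⟩
  · exact Or.inl (List.suffix_append t s)

theorem suffix_flatMap {α β : Type*} {g : α → List β} {s : List β} {w : List α}
    (h : s <:+ w.flatMap g) :
    ∃ v t, v <:+ w ∧ s = t ++ v.flatMap g ∧ (t = [] ∨ ∃ c, t <:+ g c ∧ t ≠ g c) := by
  induction w with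
  | nil => exact ⟨[], [], List.nil_suffix, List.suffix_nil.1 h, Or.inl rfl⟩
  | cons c w ih =>
    rw [List.flatMap_cons] at h
    rcases suffix_append_cases h with h | ⟨t, htc, rfl⟩
    · obtain ⟨v, t, hv, hs, ht⟩ := ih h
      exact ⟨v, t, hv.trans (List.suffix_cons c w), hs, ht⟩
    · by_cases hfull : t = g c
      · exact ⟨c :: w, [], List.suffix_refl _, by simp [hfull], Or.inl rfl⟩
      · exact ⟨w, t, List.suffix_cons c w, rfl, Or.inr ⟨c, htc, hfull⟩⟩

theorem wlt_append_of_ne_nil (x : Word) {t : Word} (ht : t ≠ []) : wlt x (x ++ t) := by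
  obtain ⟨c, t, rfl⟩ := List.exists_cons_of_ne_nil ht
  have h := List.Lex.append_left (· < ·) (List.Lex.nil (a := c) (l := t)) x
  rwa [List.append_nil] at h

theorem wlt_asymm {x y : Word} (h : wlt x y) : ¬ wlt y x :=
  asymm (r := List.Lex (· < ·)) h

theorem phi_append (u v : Word) : phi (u ++ v) = phi u ++ phi v := List.flatMap_append

theorem phi_flatten (L : List Word) : phi L.flatten = (L.map phi).flatten := by
  induction L with
  | nil => rfl
  | cons x L ih => simp [ih, phi_append]

theorem phi_iterate_append (j : ℕ) (u v : Word) :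
    phi^[j] (u ++ v) = phi^[j] u ++ phi^[j] v := by
  induction j generalizing u v with
  | zero => rfl
  | succ j ih => simp only [Function.iterate_succ_apply, phi_append, ih]

theorem head?_phi {w : Word} (hw : w ≠ []) : (phi w).head? = some false := by
  obtain ⟨c, w, rfl⟩ := List.exists_cons_of_ne_nil hw
  cases c <;> rfl

theorem head?_phi_iterate {w : Word} (hw : w.head? = some false) (j : ℕ) :
    (phi^[j] w).head? = some false := by
  induction j with
  | zero => exact hw
  | succ j ih =>
    rw [Function.iterate_succ_apply']
    exact head?_phi (by rintro h; simp [h] at ih)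

theorem wlt_phi {x y : Word} (h : wlt x y) : wlt (phi x) (phi y) := by
  induction h with
  | nil => rename_i c _; cases c <;> exact List.Lex.nil
  | cons _ ih => exact List.Lex.append_left _ ih _
  | @rel c _ d _ hcd =>
    obtain ⟨rfl, rfl⟩ : c = false ∧ d = true := by revert hcd; decide +revert
    exact List.Lex.cons (List.Lex.rel (by decide))

theorem wlt_phi_iterate (j : ℕ) {x y : Word} (h : wlt x y) : wlt (phi^[j] x) (phi^[j] y) := by
  induction j with
  | zero => exact h
  | succ j ih => simpa only [Function.iterate_succ_apply'] using wlt_phi ih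

theorem suffix_phi_image {c : Bool} {t : Word}
    (h : t <:+ if c then [false, true] else [false, false, true])
    (hne : t ≠ []) (hproper : t ≠ if c then [false, true] else [false, false, true]) :
    t = [true] ∨ t = [false, true] := by
  cases c <;> simp only [Bool.false_eq_true, if_true, if_false, List.suffix_cons_iff,
    List.suffix_nil] at h hproper <;> tauto

/-- A proper suffix of `φ w` either is the image of a proper suffix of `w`, or begins with `b` or
`ab`, whereas `φ w` begins with `aab`. -/
theorem isLyndon_phi {w : Word} (hw : IsLyndon w) (ha : w.head? = some false) :
    IsLyndon (phi w) := by
  intro s hs hne hproper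
  obtain ⟨v, t, hv, rfl, ht⟩ := suffix_flatMap hs
  obtain ⟨w', rfl⟩ := List.head?_eq_some_iff.1 ha
  rcases eq_or_ne t [] with rfl | ht_ne
  · have hv_ne : v ≠ [] := by rintro rfl; exact hne rfl
    have hvw : v ≠ false :: w' := by rintro rfl; exact hproper rfl
    exact wlt_phi (hw v hv hv_ne hvw)
  · obtain ⟨c, htc, htne⟩ := ht.resolve_left ht_ne
    have hphi : phi (false :: w') = false :: false :: true :: phi w' := rfl
    rcases suffix_phi_image htc ht_ne htne with rfl | rfl
    · rw [hphi]; exact List.Lex.rel (by decide)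
    · rw [hphi]; exact List.Lex.cons (List.Lex.rel (by decide))

theorem isLyndon_phi_iterate {w : Word} (hw : IsLyndon w) (ha : w.head? = some false) (j : ℕ) :
    IsLyndon (phi^[j] w) := by
  induction j with
  | zero => exact hw
  | succ j ih =>
    rw [Function.iterate_succ_apply']
    exact isLyndon_phi ih (head?_phi_iterate ha j)

theorem isLyndon_a : IsLyndon [false] := by
  intro s hs hne hproper
  rw [List.suffix_cons_iff, List.suffix_nil] at hs
  tauto

theorem isLyndon_ab : IsLyndon [false, true] := by
  intro s hs hne hproper
  simp only [List.suffix_cons_iff, List.suffix_nil] at hs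
  rcases hs with rfl | rfl | rfl
  · exact absurd rfl hproper
  · exact List.Lex.rel (by decide)
  · exact absurd rfl hne

theorem ell_succ_eq_phi_iterate (n : ℕ) : ell (n + 1) = phi^[n] [false, true] := by
  induction n with
  | zero => rfl
  | succ n ih => rw [Function.iterate_succ_apply', ← ih]; rfl

theorem wlt_ell_succ (n : ℕ) : wlt (ell (n + 2)) (ell (n + 1)) := by
  rw [ell_succ_eq_phi_iterate, ell_succ_eq_phi_iterate, Function.iterate_succ_apply]
  exact wlt_phi_iterate n (List.Lex.cons (List.Lex.rel (by decide)))

theorem phi_iterate_a_succ (j : ℕ) :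
    phi^[j + 1] [false] = phi^[j] [false] ++ phi^[j] [false, true] := by
  rw [Function.iterate_succ_apply, ← phi_iterate_append]
  rfl

theorem wlt_phi_iterate_a_succ (j : ℕ) : wlt (phi^[j] [false]) (phi^[j + 1] [false]) := by
  rw [phi_iterate_a_succ]
  refine wlt_append_of_ne_nil _ fun h => ?_
  simpa [h] using head?_phi_iterate (w := [false, true]) rfl j

theorem wlt_phi_iterate_a_ell (n : ℕ) : wlt (phi^[n + 1] [false]) (ell (n + 1)) := by
  rw [ell_succ_eq_phi_iterate, Function.iterate_succ_apply]
  exact wlt_phi_iterate n (List.Lex.cons (List.Lex.rel (by decide)))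

-- The list of factors of the theorem for `k = m + 2`.
def fibFactors (m : ℕ) : List Word :=
  (List.range m).map (fun j => ell (j + 1)) ++
    (List.range (m + 1)).reverse.map (fun j => phi^[j] [false])

theorem map_ell_range_succ (m : ℕ) : (List.range (m + 1)).map (fun j => ell (j + 1)) =
    [false, true] :: ((List.range m).map (fun j => ell (j + 1))).map phi := by
  rw [List.range_succ_eq_map]
  simp only [List.map_cons, List.map_map]
  rfl

theorem map_phi_iterate_range_succ_reverse (n : ℕ) :
    (List.range (n + 1)).reverse.map (fun j => phi^[j] [false]) =
      ((List.range n).reverse.map (fun j => phi^[j] [false])).map phi ++ [[false]] := by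
  rw [List.range_succ_eq_map]
  simp only [List.reverse_cons, List.map_append, List.map_reverse, List.map_map]
  congr 3
  funext j
  exact Function.iterate_succ_apply' phi j [false]

theorem fibFactors_succ (m : ℕ) :
    fibFactors (m + 1) = [false, true] :: (fibFactors m).map phi ++ [[false]] := by
  simp only [fibFactors, map_ell_range_succ, map_phi_iterate_range_succ_reverse, List.map_append]
  simp

theorem isChain_fibFactors (m : ℕ) : (fibFactors m).IsChain (fun x y => ¬ wlt x y) := by
  refine List.isChain_append.2 ⟨?_, ?_, ?_⟩
  · rw [List.isChain_map]
    cases m with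
    | zero => exact List.isChain_nil
    | succ n => exact (List.isChain_range_succ _ n).2 fun i _ => wlt_asymm (wlt_ell_succ i)
  · rw [List.map_reverse, List.isChain_reverse, List.isChain_map,
      List.isChain_range_succ]
    exact fun i _ => wlt_asymm (wlt_phi_iterate_a_succ i)
  · intro x hx y hy
    cases m with
    | zero => simp at hx
    | succ n =>
      rw [List.range_succ] at hx hy
      simp only [List.map_append, List.getLast?_concat, List.reverse_append,
        List.reverse_singleton, List.singleton_append, List.map_cons, List.map_nil,
        List.head?_cons, Option.mem_def, Option.some.injEq] at hx hy
      subst hx hy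
      exact wlt_asymm (wlt_phi_iterate_a_ell n)

theorem ab_append_phi_F (n : ℕ) :
    [false, true] ++ phi (F (n + 1)) = F (n + 3) ++ [false, true] := by
  induction n using Nat.twoStepInduction with
  | zero => rfl
  | one => rfl
  | more n ih₀ ih₁ =>
    calc [false, true] ++ phi (F (n + 3))
        = ([false, true] ++ phi (F (n + 2))) ++ phi (F (n + 1)) := by
          rw [F, phi_append, List.append_assoc]
      _ = F (n + 4) ++ ([false, true] ++ phi (F (n + 1))) := by rw [ih₁, List.append_assoc]
      _ = F (n + 5) ++ [false, true] := by rw [ih₀, ← List.append_assoc]; rfl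

theorem F_eq_flatten_fibFactors_append (m : ℕ) :
    F (2 * (m + 2)) = (fibFactors m).flatten ++ [true, false] := by
  induction m with
  | zero => rfl
  | succ m ih =>
    have h := ab_append_phi_F (2 * m + 3)
    rw [show 2 * m + 3 + 1 = 2 * (m + 2) by ring, ih, phi_append, phi_flatten,
      show 2 * m + 3 + 3 = 2 * (m + 1 + 2) by ring] at h
    apply List.append_cancel_right (bs := [false, true])
    rw [← h, fibFactors_succ]
    simp [phi]

theorem isLyndon_of_mem_fibFactors {m : ℕ} {x : Word} (hx : x ∈ fibFactors m) :
    IsLyndon x ∧ x ≠ [] := by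
  obtain ⟨w, j, hw, hwa, rfl⟩ :
      ∃ w j, IsLyndon w ∧ w.head? = some false ∧ x = phi^[j] w := by
    simp only [fibFactors, List.mem_append, List.mem_map, List.mem_reverse, List.mem_range] at hx
    rcases hx with ⟨j, -, rfl⟩ | ⟨j, -, rfl⟩
    · exact ⟨_, j, isLyndon_ab, rfl, ell_succ_eq_phi_iterate j⟩
    · exact ⟨_, j, isLyndon_a, rfl, rfl⟩
  refine ⟨isLyndon_phi_iterate hw hwa j, fun h => ?_⟩
  simpa [h] using head?_phi_iterate hwa j

/-- For `k ≥ 2`, the Lyndon factorization of `F (2k)` with its last two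
characters removed is `ℓ 1, …, ℓ (k-2), φ^(k-2)(a), …, φ^0(a)`. -/
theorem stmt13 (k : ℕ) (hk : 2 ≤ k) :
    IsLyndonFactorization ((F (2 * k)).dropLast.dropLast)
      ((List.range (k - 2)).map (fun j => ell (j + 1)) ++
        (List.range (k - 1)).reverse.map (fun j => phi^[j] [false])) := by
  obtain ⟨m, rfl⟩ : ∃ m, k = m + 2 := ⟨k - 2, by omega⟩
  show IsLyndonFactorization _ (fibFactors m)
  refine ⟨?_, fun x hx => isLyndon_of_mem_fibFactors hx, isChain_fibFactors m⟩
  rw [F_eq_flatten_fibFactors_append]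
  simp
end

section
/- For every i ≥ 0, |φ^i(a)·φ^{i-1}(a)⋯φ^0(a)| = f_{2i+3} − 1, where f_j are Fibonacci numbers with f_1 = f_2 = 1. -/
lemma phi_cons (c : Bool) (w : Word) :
    phi (c :: w) = (if c then [false, true] else [false, false, true]) ++ phi w := by
  simp [phi]

lemma phi_len_count (w : Word) :
    (phi w).length = 2 * w.length + w.count false ∧
    (phi w).count false = w.length + w.count false := by
  induction w with
  | nil => simp [phi]
  | cons c w ih =>
    rw [phi_cons]
    cases c <;> simp [List.count_cons, *] <;> omega

lemma f_add_two (n : ℕ) : f (n + 2) = f (n + 1) + f n := rfl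

lemma iter_len_count (j : ℕ) :
    (phi^[j] [false]).length = f (2 * j + 2) ∧
    (phi^[j] [false]).count false = f (2 * j + 1) := by
  induction j with
  | zero => simp [f]
  | succ n ih =>
    rw [Function.iterate_succ_apply']
    obtain ⟨h1, h2⟩ := phi_len_count (phi^[n] [false])
    obtain ⟨i1, i2⟩ := ih
    have q1 := f_add_two (2 * n + 2)
    have q2 := f_add_two (2 * n + 1)
    rw [show 2 * n + 1 + 2 = 2 * n + 2 + 1 by ring, show 2 * n + 1 + 1 = 2 * n + 2 by ring] at q2
    constructor
    · rw [show 2 * (n + 1) + 2 = 2 * n + 2 + 2 by ring]; omega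
    · rw [show 2 * (n + 1) + 1 = 2 * n + 2 + 1 by ring]; omega

lemma f_pos (n : ℕ) (hn : 1 ≤ n) : 1 ≤ f n := by
  induction n with
  | zero => omega
  | succ m ih =>
    match m, ih with
    | 0, _ => simp [f]
    | 1, _ => simp [f]
    | (k+1), ih => rw [show k+1+1 = k+2 from rfl, f]; omega

/-- `|φ^i(a) ⋯ φ^0(a)| = f (2i+3) − 1` for every `i ≥ 0`. -/
theorem stmt15 (i : ℕ) :
    (((List.range (i + 1)).reverse.map (fun j => phi^[j] [false])).flatten).length
      = f (2 * i + 3) - 1 := by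
  induction i with
  | zero =>
    simp [f]
  | succ n ih =>
    rw [show n + 1 + 1 = (n + 1) + 1 from rfl, List.range_succ, List.reverse_append]
    simp only [List.reverse_singleton, List.singleton_append, List.map_cons,
      List.flatten_cons, List.length_append]
    rw [ih, (iter_len_count (n+1)).1]
    have h1 : 1 ≤ f (2 * n + 3) := f_pos _ (by omega)
    have a := f_add_two (2 * n + 3)
    rw [show 2 * (n + 1) + 2 = 2 * n + 3 + 1 by ring,
      show 2 * (n + 1) + 3 = 2 * n + 3 + 2 by ring]
    omega
end
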